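/- arXiv:2301.04398 — 2 statements merged into one kernel-verified Lean document; each statement's English description precedes it below -/
import Mathlib

section
/- Let (X, Y) be an exceptional pair in C such that Hom(X, Y⟦m⟧) = 0 for all m ≠ 0 and Hom(X, Y) is one-dimensional over k. Let f : X → Y be a nonzero morphism and let X →f Y → Z → X⟦1⟧ be a distinguished triangle. Then (Y, Z) is an exceptional pair; in particular Z is an exceptional object and Hom(Z, Y⟦m⟧) = 0 for all m ∈ ℤ. (The object Z⟦−1⟧ is the right mutation R_Y X of X at Y.) -/
/-!
Apply `Hom(-, W)` and `Hom(W, -)` to the triangle `X ⟶ Y ⟶ Z ⟶ X⟦1⟧`. A map `Z ⟶ Y⟦m⟧`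
restricts to a map `Y ⟶ Y⟦m⟧` killed by the nonzero `f`, hence zero as `Y` is exceptional, so it
factors through `h`; and `h` kills every map `X⟦1⟧ ⟶ Y⟦m⟧`, since these vanish for `m ≠ 1` and are
multiples of `f⟦1⟧'` for `m = 1`. Hence `Hom(Z, Y⟦m⟧) = 0` for all `m`. Since `Hom(Y, X⟦j⟧) = 0`,
every map `Z ⟶ X⟦j⟧` factors through `h`, so it vanishes for `j ≠ 1` and is a multiple of `h` for
`j = 1`. These two facts, fed into the triangle once more, give `Hom(Z⟦n⟧, Z) = 0` for `n ≠ 0` and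
`Hom(Z, Z) = k · 𝟙`. Finally `Z ≠ 0`, as otherwise `f` would be invertible while `Hom(Y, X) = 0`.
-/

open CategoryTheory CategoryTheory.Limits CategoryTheory.Pretriangulated

def IsExceptional (k : Type*) [Field k] {C : Type*} [Category C] [Preadditive C]
    [Linear k C] [HasShift C ℤ] (X : C) : Prop :=
  (∀ m : ℤ, m ≠ 0 → ∀ f : X ⟶ X⟦m⟧, f = 0) ∧ Module.finrank k (X ⟶ X) = 1

namespace CategoryTheory

section Linear

variable {k : Type*} [Field k] {C : Type*} [Category C] [Preadditive C]
  [CategoryTheory.Linear k C]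

theorem Functor.finrank_hom_map_eq {D : Type*} [Category D] [Preadditive D]
    [CategoryTheory.Linear k D] (F : C ⥤ D) [F.Additive] [F.Linear k] [F.Full] [F.Faithful]
    (A B : C) :
    Module.finrank k (F.obj A ⟶ F.obj B) = Module.finrank k (A ⟶ B) :=
  (LinearEquiv.ofBijective (F.mapLinearMap k) ⟨F.map_injective, F.map_surjective⟩).finrank_eq.symm

theorem id_ne_zero_of_finrank_eq_one {A : C} (h : Module.finrank k (A ⟶ A) = 1) : 𝟙 A ≠ 0 := by
  intro h0
  have : Nontrivial (A ⟶ A) := Module.nontrivial_of_finrank_eq_succ h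
  obtain ⟨u, v, huv⟩ := exists_pair_ne (A ⟶ A)
  exact huv (((IsZero.iff_id_eq_zero A).2 h0).eq_of_src u v)

theorem exists_smul_id_eq_of_finrank_eq_one {A : C} (h : Module.finrank k (A ⟶ A) = 1)
    (u : A ⟶ A) : ∃ c : k, c • 𝟙 A = u :=
  (finrank_eq_one_iff_of_nonzero' _ (id_ne_zero_of_finrank_eq_one h)).1 h u

end Linear

section Shift

variable {C : Type*} [Category C] [HasShift C ℤ]

theorem subsingleton_shift_hom_iff {A B : C} {i j : ℤ} (hij : i + j = 0) :
    Subsingleton (A⟦i⟧ ⟶ B) ↔ Subsingleton (A ⟶ B⟦j⟧) :=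
  ((shiftEquiv' C i j hij).toAdjunction.homEquiv A B).subsingleton_congr

theorem subsingleton_shift_hom_shift_iff {A B : C} (n m : ℤ) :
    Subsingleton (A⟦n⟧ ⟶ B⟦m⟧) ↔ Subsingleton (A ⟶ B⟦m - n⟧) :=
  (subsingleton_shift_hom_iff (add_neg_cancel n)).trans
    ((Iso.refl A).homCongr ((shiftFunctorAdd' C m (-n) (m - n) (sub_eq_add_neg m n).symm).app B)
      ).subsingleton_congr.symm

theorem subsingleton_hom_shift_zero_iff {A B : C} :
    Subsingleton (A ⟶ B⟦(0 : ℤ)⟧) ↔ Subsingleton (A ⟶ B) :=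
  ((Iso.refl A).homCongr ((shiftFunctorZero C ℤ).app B)).subsingleton_congr

end Shift

end CategoryTheory

namespace IsExceptional

variable {k : Type*} [Field k] {C : Type*} [Category C] [Preadditive C] [Linear k C]
  [HasShift C ℤ] {A : C}

theorem subsingleton_hom_shift (hA : IsExceptional k A) {m : ℤ} (hm : m ≠ 0) :
    Subsingleton (A ⟶ A⟦m⟧) :=
  subsingleton_of_forall_eq 0 (hA.1 m hm)

theorem id_ne_zero (hA : IsExceptional k A) : 𝟙 A ≠ 0 :=
  id_ne_zero_of_finrank_eq_one hA.2

theorem of_exists_smul_id_eq (hshift : ∀ m : ℤ, m ≠ 0 → Subsingleton (A ⟶ A⟦m⟧))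
    (hid : 𝟙 A ≠ 0) (hspan : ∀ u : A ⟶ A, ∃ c : k, c • 𝟙 A = u) : IsExceptional k A :=
  ⟨fun m hm _ => (hshift m hm).elim _ _, finrank_eq_one _ hid hspan⟩

theorem eq_zero_of_comp_eq_zero (hA : IsExceptional k A) {B : C} {f : B ⟶ A} (hf : f ≠ 0)
    {m : ℤ} {w : A ⟶ A⟦m⟧} (hw : f ≫ w = 0) : w = 0 := by
  by_cases hm : m = 0
  · subst hm
    let e := (shiftFunctorZero C ℤ).app A
    obtain ⟨c, hc⟩ := exists_smul_id_eq_of_finrank_eq_one hA.2 (w ≫ e.hom)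
    have hcf : c • f = 0 := by
      rw [← Category.comp_id f, ← Linear.comp_smul, hc, ← Category.assoc, hw, zero_comp]
    have hc0 : c = 0 := (smul_eq_zero.1 hcf).resolve_right hf
    rw [← cancel_mono e.hom, ← hc, hc0, zero_smul, zero_comp]
  · exact (hA.subsingleton_hom_shift hm).elim _ _

end IsExceptional

namespace CategoryTheory.Pretriangulated

variable {k : Type*} [Field k] {C : Type*} [Category C] [HasZeroObject C] [Preadditive C]
  [Linear k C] [HasShift C ℤ] [∀ m : ℤ, (shiftFunctor C m).Additive] [Pretriangulated C]
  {X Y Z : C} {f : X ⟶ Y} {g : Y ⟶ Z} {h : Z ⟶ X⟦(1 : ℤ)⟧}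

theorem subsingleton_hom_obj₃_shift_obj₁ (hT : Triangle.mk f g h ∈ distTriang C)
    (hX : ∀ m : ℤ, m ≠ 0 → Subsingleton (X ⟶ X⟦m⟧)) (hYX : ∀ m : ℤ, Subsingleton (Y ⟶ X⟦m⟧))
    {j : ℤ} (hj : j ≠ 1) : Subsingleton (Z ⟶ X⟦j⟧) := by
  have hXX : Subsingleton (X⟦(1 : ℤ)⟧ ⟶ X⟦j⟧) :=
    (subsingleton_shift_hom_shift_iff 1 j).2 (hX _ (sub_ne_zero.2 hj))
  refine subsingleton_of_forall_eq 0 fun w => ?_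
  obtain ⟨v, rfl⟩ : ∃ v : X⟦(1 : ℤ)⟧ ⟶ X⟦j⟧, w = h ≫ v :=
    Triangle.yoneda_exact₃ _ hT w ((hYX j).elim _ _)
  rw [hXX.elim v 0, comp_zero]

theorem subsingleton_hom_obj₃_shift_obj₃ (hT : Triangle.mk f g h ∈ distTriang C)
    (hZX : ∀ j : ℤ, j ≠ 1 → Subsingleton (Z ⟶ X⟦j⟧)) (hZY : ∀ m : ℤ, Subsingleton (Z ⟶ Y⟦m⟧))
    {m : ℤ} (hm : m ≠ 0) : Subsingleton (Z ⟶ Z⟦m⟧) := by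
  refine (subsingleton_shift_hom_iff (neg_add_cancel m)).1 <|
    subsingleton_of_forall_eq 0 fun u => ?_
  have hZX' : Subsingleton (Z⟦-m⟧ ⟶ X⟦(1 : ℤ)⟧) :=
    (subsingleton_shift_hom_shift_iff (-m) 1).2 (hZX (1 - -m) (by omega))
  obtain ⟨v, rfl⟩ : ∃ v : Z⟦-m⟧ ⟶ Y, u = v ≫ g := Triangle.coyoneda_exact₃ _ hT u (hZX'.elim _ _)
  have hZY' : Subsingleton (Z⟦-m⟧ ⟶ Y) :=
    (subsingleton_shift_hom_iff (neg_add_cancel m)).2 (hZY m)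
  rw [hZY'.elim v 0, zero_comp]

theorem exists_smul_id_obj₃_eq (hT : Triangle.mk f g h ∈ distTriang C)
    (hZX : ∀ w : Z ⟶ X⟦(1 : ℤ)⟧, ∃ c : k, c • h = w) (hZY : Subsingleton (Z ⟶ Y))
    (u : Z ⟶ Z) : ∃ c : k, c • 𝟙 Z = u := by
  obtain ⟨c, hc⟩ := hZX (u ≫ h)
  refine ⟨c, ?_⟩
  have hu : (u - c • 𝟙 Z) ≫ h = 0 := by
    rw [Preadditive.sub_comp, Linear.smul_comp, Category.id_comp, hc, sub_self]
  obtain ⟨v, hv⟩ : ∃ v : Z ⟶ Y, u - c • 𝟙 Z = v ≫ g := Triangle.coyoneda_exact₃ _ hT _ hu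
  rw [Subsingleton.elim v 0, zero_comp, sub_eq_zero] at hv
  exact hv.symm

theorem id_obj₃_ne_zero (hT : Triangle.mk f g h ∈ distTriang C) (hX : 𝟙 X ≠ 0)
    (hYX : Subsingleton (Y ⟶ X)) : 𝟙 Z ≠ 0 := by
  intro hZ
  have : IsIso f := (Triangle.isZero₃_iff_isIso₁ _ hT).1 ((IsZero.iff_id_eq_zero Z).2 hZ)
  exact hX (by rw [← IsIso.hom_inv_id f, Subsingleton.elim (inv f) 0, comp_zero])

variable [∀ m : ℤ, (shiftFunctor C m).Linear k]

theorem exists_smul_mor₃_eq (hT : Triangle.mk f g h ∈ distTriang C)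
    (hX : Module.finrank k (X ⟶ X) = 1) (hYX : Subsingleton (Y ⟶ X⟦(1 : ℤ)⟧))
    (w : Z ⟶ X⟦(1 : ℤ)⟧) : ∃ c : k, c • h = w := by
  obtain ⟨v, rfl⟩ : ∃ v : X⟦(1 : ℤ)⟧ ⟶ X⟦(1 : ℤ)⟧, w = h ≫ v :=
    Triangle.yoneda_exact₃ _ hT w (hYX.elim _ _)
  have hX₁ : Module.finrank k (X⟦(1 : ℤ)⟧ ⟶ X⟦(1 : ℤ)⟧) = 1 :=
    ((shiftFunctor C (1 : ℤ)).finrank_hom_map_eq X X).trans hX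
  obtain ⟨c, rfl⟩ := exists_smul_id_eq_of_finrank_eq_one hX₁ v
  exact ⟨c, by rw [Linear.comp_smul, Category.comp_id]⟩

theorem mor₃_comp_eq_zero (hT : Triangle.mk f g h ∈ distTriang C)
    (hXY : ∀ m : ℤ, m ≠ 0 → Subsingleton (X ⟶ Y⟦m⟧)) (hXY₁ : Module.finrank k (X ⟶ Y) = 1)
    (hf : f ≠ 0) {m : ℤ} (v : X⟦(1 : ℤ)⟧ ⟶ Y⟦m⟧) : h ≫ v = 0 := by
  by_cases hm : m = 1
  · subst hm
    obtain ⟨u, rfl⟩ := (shiftFunctor C (1 : ℤ)).map_surjective v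
    obtain ⟨c, rfl⟩ := (finrank_eq_one_iff_of_nonzero' f hf).1 hXY₁ u
    have hhf : h ≫ f⟦(1 : ℤ)⟧' = 0 := comp_distTriang_mor_zero₃₁ _ hT
    rw [Functor.map_smul, Linear.comp_smul, hhf, smul_zero]
  · have : Subsingleton (X⟦(1 : ℤ)⟧ ⟶ Y⟦m⟧) :=
      (subsingleton_shift_hom_shift_iff 1 m).2 (hXY _ (sub_ne_zero.2 hm))
    rw [Subsingleton.elim v 0, comp_zero]

theorem subsingleton_hom_obj₃_shift_obj₂ (hT : Triangle.mk f g h ∈ distTriang C)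
    (hY : IsExceptional k Y) (hXY : ∀ m : ℤ, m ≠ 0 → Subsingleton (X ⟶ Y⟦m⟧))
    (hXY₁ : Module.finrank k (X ⟶ Y) = 1) (hf : f ≠ 0) (m : ℤ) :
    Subsingleton (Z ⟶ Y⟦m⟧) := by
  refine subsingleton_of_forall_eq 0 fun u => ?_
  have hfg : f ≫ g = 0 := comp_distTriang_mor_zero₁₂ _ hT
  have hgu : g ≫ u = 0 :=
    hY.eq_zero_of_comp_eq_zero hf (by rw [← Category.assoc, hfg, zero_comp])
  obtain ⟨v, rfl⟩ := Triangle.yoneda_exact₃ _ hT u hgu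
  exact mor₃_comp_eq_zero hT hXY hXY₁ hf v

end CategoryTheory.Pretriangulated

/-- Right mutation of an exceptional pair: if `(X, Y)` is an exceptional pair with
`Hom(X, Y⟦m⟧) = 0` for `m ≠ 0` and `Hom(X, Y)` one-dimensional, `f : X ⟶ Y` nonzero, and
`X ⟶ Y ⟶ Z ⟶ X⟦1⟧` a distinguished triangle, then `(Y, Z)` is an exceptional pair: `Z` is
exceptional and `Hom(Z, Y⟦m⟧) = 0` for all `m`. (`Z⟦-1⟧` is the right mutation `R_Y X`.) -/
theorem right_mutation_exceptional_pair (k : Type*) [Field k] {C : Type*} [Category C]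
    [HasZeroObject C] [Preadditive C] [Linear k C] [HasShift C ℤ]
    [∀ m : ℤ, (shiftFunctor C m).Additive] [∀ m : ℤ, (shiftFunctor C m).Linear k]
    [Pretriangulated C]
    {X Y Z : C}
    (hX : IsExceptional k X) (hY : IsExceptional k Y)
    (hpair : ∀ m : ℤ, ∀ f : Y ⟶ X⟦m⟧, f = 0)
    (hXY0 : ∀ m : ℤ, m ≠ 0 → ∀ f : X ⟶ Y⟦m⟧, f = 0)
    (hXY1 : Module.finrank k (X ⟶ Y) = 1)
    (f : X ⟶ Y) (hf : f ≠ 0)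
    (g : Y ⟶ Z) (h : Z ⟶ X⟦(1 : ℤ)⟧)
    (hT : Triangle.mk f g h ∈ distTriang C) :
    IsExceptional k Z ∧ ∀ m : ℤ, ∀ u : Z ⟶ Y⟦m⟧, u = 0 := by
  have hYX (m : ℤ) : Subsingleton (Y ⟶ X⟦m⟧) := subsingleton_of_forall_eq 0 (hpair m)
  have hXY (m : ℤ) (hm : m ≠ 0) : Subsingleton (X ⟶ Y⟦m⟧) :=
    subsingleton_of_forall_eq 0 (hXY0 m hm)
  have hZX (j : ℤ) (hj : j ≠ 1) : Subsingleton (Z ⟶ X⟦j⟧) :=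
    subsingleton_hom_obj₃_shift_obj₁ hT (fun _ => hX.subsingleton_hom_shift) hYX hj
  have hZY : ∀ m : ℤ, Subsingleton (Z ⟶ Y⟦m⟧) :=
    subsingleton_hom_obj₃_shift_obj₂ hT hY hXY hXY1 hf
  have hZZ : ∀ u : Z ⟶ Z, ∃ c : k, c • 𝟙 Z = u :=
    exists_smul_id_obj₃_eq hT (exists_smul_mor₃_eq hT hX.2 (hYX 1))
      (subsingleton_hom_shift_zero_iff.1 (hZY 0))
  have hZ : 𝟙 Z ≠ 0 :=
    id_obj₃_ne_zero hT hX.id_ne_zero (subsingleton_hom_shift_zero_iff.1 (hYX 0))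
  exact ⟨.of_exists_smul_id_eq (fun _ => subsingleton_hom_obj₃_shift_obj₃ hT hZX hZY) hZ hZZ,
    fun m u => (hZY m).elim _ _⟩
end

section
/- Let (X, Y) be an exceptional pair in C such that Hom(X, Y⟦m⟧) = 0 for all m ≠ 0 and Hom(X, Y) is one-dimensional over k, let f : X → Y be a nonzero morphism, and let X →f Y → Z → X⟦1⟧ be a distinguished triangle. Let Φ : C ⥤ C be a k-linear triangulated equivalence commuting with the shift, and suppose Φ(X) ≅ X⟦a⟧ and Φ(Y) ≅ Y⟦b⟧ for some integers a, b. Then a = b and Φ(Z) ≅ Z⟦a⟧; that is, an autoequivalence preserving the exceptional pair up to shift also preserves its mutation up to shift. -/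
/-!
An autoequivalence `Φ` maps the triangle `X → Y → Z → X⟦1⟧` to a distinguished triangle
`Φ X → Φ Y → Φ Z → Φ X⟦1⟧`, whose first morphism, read through `Φ X ≅ X⟦a⟧` and `Φ Y ≅ Y⟦b⟧`,
is a nonzero element of `Hom(X⟦a⟧, Y⟦b⟧) ≅ Hom(X, Y⟦b - a⟧)`; hence `a = b`. Then it lies in the
line `Hom(X⟦a⟧, Y⟦a⟧) ≅ Hom(X, Y)`, so it is a nonzero multiple of the first morphism of the
shifted triangle `X⟦a⟧ → Y⟦a⟧ → Z⟦a⟧ → X⟦a + 1⟧`. Rescaling one isomorphism makes the square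
commute, and the third objects of two distinguished triangles on isomorphic arrows are isomorphic.
-/

open CategoryTheory CategoryTheory.Limits CategoryTheory.Pretriangulated

namespace CategoryTheory

lemma Functor.finrank_hom_obj (k : Type*) [Field k] {C D : Type*} [Category C] [Category D]
    [Preadditive C] [Preadditive D] [CategoryTheory.Linear k C] [CategoryTheory.Linear k D]
    (F : C ⥤ D) [F.Additive] [F.Linear k] [F.Full] [F.Faithful] (X Y : C) :
    Module.finrank k (F.obj X ⟶ F.obj Y) = Module.finrank k (X ⟶ Y) :=
  (LinearEquiv.ofBijective (F.mapLinearMap k) ⟨F.map_injective, F.map_surjective⟩).finrank_eq.symm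

lemma eq_of_shift_hom_ne_zero {C : Type*} [Category C] [Preadditive C] [HasShift C ℤ]
    [∀ m : ℤ, (shiftFunctor C m).Additive] {X Y : C}
    (hXY : ∀ m : ℤ, m ≠ 0 → ∀ f : X ⟶ Y⟦m⟧, f = 0) {a b : ℤ} (u : X⟦a⟧ ⟶ Y⟦b⟧) (hu : u ≠ 0) :
    a = b := by
  by_contra hab
  let e := (shiftFunctorAdd' C (b - a) a b (by omega)).app Y
  have hv := hXY (b - a) (sub_ne_zero.mpr (Ne.symm hab)) ((shiftFunctor C a).preimage (u ≫ e.hom))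
  apply hu
  rw [← Preadditive.IsIso.comp_right_eq_zero u e.hom, ← (shiftFunctor C a).map_preimage (u ≫ e.hom),
    hv, Functor.map_zero]

namespace Pretriangulated

variable {C : Type*} [Category C] [HasZeroObject C] [Preadditive C] [HasShift C ℤ]
  [∀ m : ℤ, (shiftFunctor C m).Additive] [Pretriangulated C]

lemma nonempty_iso_obj₃_of_mor₁_eq_smul {k : Type*} [Field k] [Linear k C] {T₁ T₂ : Triangle C}
    (h₁ : T₁ ∈ distTriang C) (h₂ : T₂ ∈ distTriang C) (e₁ : T₁.obj₁ ≅ T₂.obj₁)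
    (e₂ : T₁.obj₂ ≅ T₂.obj₂) {c : k} (hc : c ≠ 0) (w : e₁.inv ≫ T₁.mor₁ ≫ e₂.hom = c • T₂.mor₁) :
    Nonempty (T₁.obj₃ ≅ T₂.obj₃) := by
  let u := Units.mk0 c hc
  let e₂' : T₁.obj₂ ≅ T₂.obj₂ :=
    { hom := u⁻¹ • e₂.hom
      inv := u • e₂.inv
      hom_inv_id := by simp [Linear.units_smul_comp, Linear.comp_units_smul]
      inv_hom_id := by simp [Linear.units_smul_comp, Linear.comp_units_smul] }
  have comm : T₁.mor₁ ≫ e₂'.hom = e₁.hom ≫ T₂.mor₁ := by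
    rw [Iso.inv_comp_eq, Linear.comp_smul] at w
    rw [Linear.comp_units_smul, w, Units.smul_def, smul_smul, Units.val_inv_eq_inv_val,
      Units.val_mk0, inv_mul_cancel₀ hc, one_smul]
  obtain ⟨e, -, -⟩ := exists_iso_of_arrow_iso _ _ h₁ h₂ (Arrow.isoMk e₁ e₂' comm.symm)
  exact ⟨Triangle.π₃.mapIso e⟩

end Pretriangulated

end CategoryTheory

/-- An autoequivalence preserving an exceptional pair up to shift also preserves its mutation
up to shift: if `(X, Y)` is an exceptional pair with `Hom(X, Y⟦m⟧) = 0` for `m ≠ 0` and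
`Hom(X, Y)` one-dimensional, `f : X ⟶ Y` nonzero, `X ⟶ Y ⟶ Z ⟶ X⟦1⟧` a distinguished
triangle, and `Φ` a `k`-linear triangulated autoequivalence commuting with the shift with
`Φ(X) ≅ X⟦a⟧` and `Φ(Y) ≅ Y⟦b⟧`, then `a = b` and `Φ(Z) ≅ Z⟦a⟧`. -/
theorem autoequivalence_preserves_mutation (k : Type*) [Field k] {C : Type*} [Category C]
    [HasZeroObject C] [Preadditive C] [Linear k C] [HasShift C ℤ]
    [∀ m : ℤ, (shiftFunctor C m).Additive] [∀ m : ℤ, (shiftFunctor C m).Linear k]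
    [Pretriangulated C]
    (Φ : C ⥤ C) [Φ.Additive] [Φ.Linear k] [Φ.CommShift ℤ] [Φ.IsTriangulated]
    [Φ.IsEquivalence]
    {X Y Z : C}
    (hX : IsExceptional k X) (hY : IsExceptional k Y)
    (hpair : ∀ m : ℤ, ∀ f : Y ⟶ X⟦m⟧, f = 0)
    (hXY0 : ∀ m : ℤ, m ≠ 0 → ∀ f : X ⟶ Y⟦m⟧, f = 0)
    (hXY1 : Module.finrank k (X ⟶ Y) = 1)
    (f : X ⟶ Y) (hf : f ≠ 0)
    (g : Y ⟶ Z) (h : Z ⟶ X⟦(1 : ℤ)⟧)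
    (hT : Triangle.mk f g h ∈ distTriang C)
    (a b : ℤ) (hΦX : Nonempty (Φ.obj X ≅ X⟦a⟧)) (hΦY : Nonempty (Φ.obj Y ≅ Y⟦b⟧)) :
    a = b ∧ Nonempty (Φ.obj Z ≅ Z⟦a⟧) := by
  obtain ⟨eX⟩ := hΦX
  obtain ⟨eY⟩ := hΦY
  have hf₁ : eX.inv ≫ Φ.map f ≫ eY.hom ≠ 0 := by
    simpa [Φ.map_eq_zero_iff] using hf
  obtain rfl : a = b := eq_of_shift_hom_ne_zero hXY0 _ hf₁
  let T := Triangle.mk f g h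
  have hmor₁ : (T⟦a⟧).mor₁ ≠ 0 := by
    change a.negOnePow • f⟦a⟧' ≠ 0
    simpa [smul_eq_zero_iff_eq, (shiftFunctor C a).map_eq_zero_iff] using hf
  obtain ⟨c, hc⟩ := (finrank_eq_one_iff_of_nonzero' (K := k) _ hmor₁).mp
    ((shiftFunctor C a).finrank_hom_obj k X Y ▸ hXY1) (eX.inv ≫ Φ.map f ≫ eY.hom)
  have hc₀ : c ≠ 0 := by
    rintro rfl
    exact hf₁ (hc.symm.trans (zero_smul k _))
  exact ⟨rfl, nonempty_iso_obj₃_of_mor₁_eq_smul (Φ.map_distinguished T hT)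
    (Triangle.shift_distinguished T hT a) eX eY hc₀ hc.symm⟩
end
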